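/- Let 𝔫 be a k-step nilpotent real Lie algebra with associated spectral sequence {E_r^{p,q}}. Then E_∞^{k−1,2−k} ≅ H¹(𝔫) = ker(d : 𝔫* → Λ²𝔫*), and E_∞^{p,1−p} = 0 for all p = 0,…,k−2. -/

import Mathlib

open Module

namespace CE

variable (L : Type) [LieRing L] [LieAlgebra ℝ L]

/-- The space of alternating `p`-forms on `L` with values in `ℝ`. -/
abbrev Form (p : ℕ) := L [⋀^Fin p]→ₗ[ℝ] ℝ

/-- Alternatization, as a linear map. -/
noncomputable def altLin (p : ℕ) :
    MultilinearMap ℝ (fun _ : Fin p => L) ℝ →ₗ[ℝ] Form L p where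
  toFun := MultilinearMap.alternatization
  map_add' _ _ := map_add _ _ _
  map_smul' c m := by
    ext v
    simp only [MultilinearMap.alternatization_apply, MultilinearMap.domDomCongr_apply,
      MultilinearMap.smul_apply, RingHom.id_apply, AlternatingMap.smul_apply,
      Finset.smul_sum]
    exact Finset.sum_congr rfl fun σ _ => smul_comm _ _ _

/-- Inclusion of alternating maps into multilinear maps, as a linear map. -/
noncomputable def toMulti (p : ℕ) :
    Form L p →ₗ[ℝ] MultilinearMap ℝ (fun _ : Fin p => L) ℝ where
  toFun f := f.toMultilinearMap
  map_add' _ _ := rfl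
  map_smul' _ _ := rfl

/-- The Lie bracket of `L` as a bilinear map. -/
noncomputable def bracketL : L →ₗ[ℝ] L →ₗ[ℝ] L :=
  ((LieAlgebra.ad ℝ L) : L →ₗ[ℝ] Module.End ℝ L)

/-- The Chevalley–Eilenberg differential (trivial coefficients):
`(d x)(u₀, …, u_p) = ∑_{i<j} (-1)^{i+j} x([uᵢ, uⱼ], u₀, …, ûᵢ, …, ûⱼ, …, u_p)`,
so that on `1`-forms `(d x)(u, v) = -x ⁅u, v⁆`. -/
noncomputable def ceDiff : ∀ p : ℕ, Form L p →ₗ[ℝ] Form L (p + 1)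
  | 0 => 0
  | (q + 1) =>
    (-(1 : ℝ) / (2 * q.factorial)) •
      ((altLin L (q + 2)).comp
        (((multilinearCurryLeftEquiv ℝ (fun _ : Fin (q + 2) => L) ℝ).symm.toLinearMap).comp
          ((LinearMap.llcomp ℝ L (L →ₗ[ℝ] MultilinearMap ℝ (fun _ : Fin q => L) ℝ)
              (MultilinearMap ℝ (fun _ : Fin (q + 1) => L) ℝ)
              (multilinearCurryLeftEquiv ℝ (fun _ : Fin (q + 1) => L) ℝ).symm.toLinearMap).comp
            (((LinearMap.lcomp ℝ (L →ₗ[ℝ] MultilinearMap ℝ (fun _ : Fin q => L) ℝ)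
                (bracketL L)).comp
              (LinearMap.llcomp ℝ L L (MultilinearMap ℝ (fun _ : Fin q => L) ℝ))).comp
              (((multilinearCurryLeftEquiv ℝ (fun _ : Fin (q + 1) => L) ℝ).toLinearMap).comp
                (toMulti L (q + 1)))))))

/-- The wedge product `β₁ ∧ ⋯ ∧ β_q` of a family of `1`-forms, in determinant
normalization: `(β₁ ∧ ⋯ ∧ β_q)(v₁, …, v_q) = det (βᵢ (v_j))`. -/
noncomputable def wedgeFns {q : ℕ} (β : Fin q → Module.Dual ℝ L) : Form L q :=
  MultilinearMap.alternatization
    ((MultilinearMap.mkPiAlgebra ℝ (Fin q) ℝ).compLinearMap β)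

/-- The subspace `Λ^q V` of `q`-forms spanned by wedges of elements of `V ⊆ 𝔫*`. -/
noncomputable def lambdaPow (V : Submodule ℝ (Module.Dual ℝ L)) (q : ℕ) :
    Submodule ℝ (Form L q) :=
  Submodule.span ℝ
    {x | ∃ β : Fin q → Module.Dual ℝ L, (∀ i, β i ∈ V) ∧ x = wedgeFns L β}

/-- A linear functional viewed as a `1`-form. -/
noncomputable def oneForm : Module.Dual ℝ L →ₗ[ℝ] Form L 1 where
  toFun x := AlternatingMap.ofSubsingleton ℝ L ℝ (0 : Fin 1) x
  map_add' x y := by ext v; simp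
  map_smul' c x := by ext v; simp

/-- The Chevalley–Eilenberg differential on `𝔫* = Λ¹𝔫*`, `(d x)(u,v) = -x ⁅u,v⁆`. -/
noncomputable def dOne : Module.Dual ℝ L →ₗ[ℝ] Form L 2 :=
  (ceDiff L 1).comp (oneForm L)

/-- The `i`-th term `𝔫^i` of the lower central series, as a submodule. -/
noncomputable def lcs (i : ℕ) : Submodule ℝ L :=
  (LieModule.lowerCentralSeries ℝ L L i).toSubmodule

/-- The filtration `V_i = (𝔫^i)°` of `𝔫*` by the annihilators of the lower
central series. -/
noncomputable def Vfil (i : ℕ) : Submodule ℝ (Module.Dual ℝ L) :=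
  (lcs L i).dualAnnihilator

/-- `V_i` for `i : ℤ`, with `V_i = 0` for `i ≤ 0`. -/
noncomputable def VZ (i : ℤ) : Submodule ℝ (Module.Dual ℝ L) := Vfil L i.toNat

/-- `Λ^n V_i` for `i : ℤ`, with the convention coming from the filtration of the
Chevalley–Eilenberg complex: in degree `0` this is `0` for `i ≤ 0` and `ℝ` for `i ≥ 1`. -/
noncomputable def lambdaV (i : ℤ) (n : ℕ) : Submodule ℝ (Form L n) :=
  if i ≤ 0 ∧ n = 0 then ⊥ else lambdaPow L (VZ L i) n

/-- Wedge product of forms. -/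
noncomputable def wedge {a b : ℕ} (x : Form L a) (y : Form L b) : Form L (a + b) :=
  ((LinearMap.mul' ℝ ℝ).compAlternatingMap (x.domCoprod y)).domDomCongr finSumFinEquiv

/-- Cocycles (closed forms). -/
noncomputable def cocycles (n : ℕ) : Submodule ℝ (Form L n) :=
  LinearMap.ker (ceDiff L n)

/-- Coboundaries (exact forms). -/
noncomputable def coboundaries : (n : ℕ) → Submodule ℝ (Form L n)
  | 0 => ⊥
  | (m + 1) => LinearMap.range (ceDiff L m)

/-- Lie algebra cohomology with trivial coefficients `H^n(𝔫) = Z^n/B^n`. -/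
abbrev cohomology (n : ℕ) :=
  @HasQuotient.Quotient ↥(cocycles L n) _ (@Submodule.hasQuotient ℝ ↥(cocycles L n) _ _ _)
    (Submodule.comap (cocycles L n).subtype (coboundaries L n))

/-- Closed forms in `Λ^n V_i`. -/
noncomputable def Zcl (i : ℤ) (n : ℕ) : Submodule ℝ (Form L n) :=
  lambdaV L i n ⊓ LinearMap.ker (ceDiff L n)

/-- `A^{i,j}_n = {x ∈ Λ^n V_i : dx ∈ Λ^{n+1} V_j}`. -/
noncomputable def Aset (i j : ℤ) (n : ℕ) : Submodule ℝ (Form L n) :=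
  lambdaV L i n ⊓ Submodule.comap (ceDiff L n) (lambdaV L j (n + 1))

/-- Denominator of the limit term of the spectral sequence:
`d({x ∈ Λ^{n-1}𝔫* : dx ∈ Λ^n V_i}) + {x ∈ Λ^n V_{i-1} : dx = 0}`. -/
noncomputable def EinfDen (i : ℤ) : (n : ℕ) → Submodule ℝ (Form L n)
  | 0 => Zcl L (i - 1) 0
  | (m + 1) =>
      Submodule.map (ceDiff L m)
          (Submodule.comap (ceDiff L m) (lambdaV L i (m + 1))) ⊔
        Zcl L (i - 1) (m + 1)

/-- The limit term `E_∞^{p,q}` of the spectral sequence of a `k`-step nilpotent Lie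
algebra: `E_∞^{p,q} = {x ∈ Λ^{p+q}V_{k-p} : dx = 0} /
(d{x ∈ Λ^{p+q-1}𝔫* : dx ∈ Λ^{p+q}V_{k-p}} + {x ∈ Λ^{p+q}V_{k-p-1} : dx = 0})`. -/
abbrev Einf (k : ℕ) (p q : ℤ) :=
  @HasQuotient.Quotient ↥(Zcl L ((k : ℤ) - p) (p + q).toNat) _ (@Submodule.hasQuotient ℝ ↥(Zcl L ((k : ℤ) - p) (p + q).toNat) _ _ _)
    (Submodule.comap (Zcl L ((k : ℤ) - p) (p + q).toNat).subtype
      (EinfDen L ((k : ℤ) - p) (p + q).toNat))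

/-- Numerator `A_r^{p,q}` of the `r`-th page term (for `r = 0` it is `F^pC^{p+q} = Λ^{p+q}V_{k-p}`). -/
noncomputable def ErNum (i : ℤ) (r : ℕ) (n : ℕ) : Submodule ℝ (Form L n) :=
  match r with
  | 0 => lambdaV L i n
  | (r' + 1) => Aset L i (i - (r' + 1)) n

/-- Denominator of the `r`-th page term:
`d(A_{r-1}^{p-r+1,q+r-2}) + A_{r-1}^{p+1,q-1}` for `r ≥ 1`, and `F^{p+1}C^{p+q}` for `r = 0`. -/
noncomputable def ErDen (i : ℤ) (r : ℕ) (n : ℕ) : Submodule ℝ (Form L n) :=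
  match r, n with
  | 0, n => lambdaV L (i - 1) n
  | (r' + 1), 0 => Aset L (i - 1) (i - (r' + 1)) 0
  | (r' + 1), (m + 1) =>
      Submodule.map (ceDiff L m)
          (lambdaV L (i + (r' + 1) - 1) m ⊓
            Submodule.comap (ceDiff L m) (lambdaV L i (m + 1))) ⊔
        Aset L (i - 1) (i - (r' + 1)) (m + 1)

/-- The term `E_r^{p,q}` of the spectral sequence of a `k`-step nilpotent Lie algebra. -/
abbrev Er (k r : ℕ) (p q : ℤ) :=
  @HasQuotient.Quotient ↥(ErNum L ((k : ℤ) - p) r (p + q).toNat) _ (@Submodule.hasQuotient ℝ ↥(ErNum L ((k : ℤ) - p) r (p + q).toNat) _ _ _)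
    (Submodule.comap (ErNum L ((k : ℤ) - p) r (p + q).toNat).subtype
      (ErDen L ((k : ℤ) - p) r (p + q).toNat))

end CE

/-!
A `1`-form `x` is closed iff `x ⁅u, v⁆ = 0` for all `u, v`, i.e. iff `x` annihilates `𝔫¹`, i.e.
`x ∈ V₁`; and there are no `1`-coboundaries, so `H¹(𝔫) = Z¹`. Hence in total degree `1` the closed
forms in `Λ¹V_i` are `0` for `i = 0` and all of `Z¹` for `i ≥ 1`, so the only nonzero graded piece
`E_∞^{p,1-p}` is the one with `k - p = 1`, and it is `Z¹ = H¹(𝔫)`.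
-/

namespace CE

variable (L : Type) [LieRing L] [LieAlgebra ℝ L]

theorem dOne_apply (x : Module.Dual ℝ L) (u v : L) :
    dOne L x ![u, v] = -x ⁅u, v⁆ := by
  have huniv : (Finset.univ : Finset (Equiv.Perm (Fin 2))) = {1, Equiv.swap 0 1} := by decide
  simp only [dOne, oneForm, ceDiff, altLin, toMulti, bracketL,
    MultilinearMap.alternatization_apply, LinearMap.smul_apply, LinearMap.coe_comp,
    Function.comp_apply, LinearMap.coe_mk, AddHom.coe_mk, LinearEquiv.coe_coe,
    AlternatingMap.smul_apply, MultilinearMap.domDomCongr_apply, smul_eq_mul, huniv]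
  rw [Finset.sum_pair (by decide)]
  simp [multilinearCurryLeftEquiv_apply, multilinearCurryLeftEquiv_symm_apply, Fin.tail]
  rw [← lie_skew u v, map_neg]
  ring

theorem oneForm_bijective : Function.Bijective (oneForm L) :=
  (AlternatingMap.ofSubsingleton ℝ L ℝ (0 : Fin 1)).bijective

theorem mem_Vfil_one_iff (x : Module.Dual ℝ L) :
    x ∈ Vfil L 1 ↔ ∀ u v : L, x ⁅u, v⁆ = 0 := by
  rw [Vfil, lcs, LieModule.lowerCentralSeries_succ, LieModule.lowerCentralSeries_zero,
    LieSubmodule.lieIdeal_oper_eq_linear_span', Submodule.mem_dualAnnihilator]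
  change Submodule.span ℝ _ ≤ LinearMap.ker x ↔ _
  simp only [Submodule.span_le, Set.subset_def, LieSubmodule.mem_top, true_and,
    Set.mem_ofPred_eq, forall_exists_index, SetLike.mem_coe, LinearMap.mem_ker]
  exact ⟨fun h u v => h _ u v rfl, fun h _ u v hw => hw ▸ h u v⟩

theorem ker_dOne : LinearMap.ker (dOne L) = Vfil L 1 := by
  ext x
  rw [LinearMap.mem_ker, mem_Vfil_one_iff]
  constructor
  · intro h u v
    simpa using congr($h ![u, v]).symm.trans (dOne_apply L x u v)
  · intro h
    ext v
    rw [show v = ![v 0, v 1] from (FinVec.etaExpand_eq v).symm, dOne_apply, h, neg_zero]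
    rfl

theorem cocycles_one : cocycles L 1 = (Vfil L 1).map (oneForm L) := by
  rw [← ker_dOne, dOne, LinearMap.ker_comp,
    Submodule.map_comap_eq_of_surjective (oneForm_bijective L).2, cocycles]

theorem wedgeFns_one (β : Fin 1 → Module.Dual ℝ L) : wedgeFns L β = oneForm L (β 0) := by
  ext v
  simp [wedgeFns, MultilinearMap.alternatization_apply, oneForm]

theorem lambdaV_one (i : ℤ) : lambdaV L i 1 = (VZ L i).map (oneForm L) := by
  rw [lambdaV, if_neg (fun h => one_ne_zero h.2), lambdaPow,
    ← Submodule.span_eq (Submodule.map _ _), Submodule.map_coe]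
  congr 1
  ext x
  constructor
  · rintro ⟨β, hβ, rfl⟩
    exact ⟨β 0, hβ 0, (wedgeFns_one L β).symm⟩
  · rintro ⟨y, hy, rfl⟩
    exact ⟨fun _ => y, fun _ => hy, (wedgeFns_one L fun _ => y).symm⟩

theorem coboundaries_one : coboundaries L 1 = ⊥ := LinearMap.range_zero

theorem Zcl_zero_one : Zcl L 0 1 = ⊥ := by
  rw [Zcl, lambdaV_one, VZ, Int.toNat_zero, Vfil, lcs, LieModule.lowerCentralSeries_zero,
    LieSubmodule.top_toSubmodule, Submodule.dualAnnihilator_top, Submodule.map_bot, bot_inf_eq]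

theorem Vfil_mono : Monotone (Vfil L) := fun _ _ h =>
  Submodule.dualAnnihilator_anti ((LieSubmodule.toSubmodule_le_toSubmodule _ _).2
    (LieModule.antitone_lowerCentralSeries ℝ L L h))

theorem Zcl_one_eq_cocycles {i : ℤ} (hi : 1 ≤ i) : Zcl L i 1 = cocycles L 1 := by
  refine inf_eq_right.2 ?_
  change cocycles L 1 ≤ _
  rw [cocycles_one, lambdaV_one]
  exact Submodule.map_mono (Vfil_mono L (by omega : 1 ≤ i.toNat))

theorem EinfDen_one (i : ℤ) : EinfDen L i 1 = Zcl L (i - 1) 1 := by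
  rw [EinfDen, show ceDiff L 0 = 0 from rfl, Submodule.map_zero, bot_sup_eq]

noncomputable def cohomologyOneEquivCocycles : cohomology L 1 ≃ₗ[ℝ] cocycles L 1 :=
  Submodule.quotEquivOfEqBot _ <| by
    rw [coboundaries_one, Submodule.comap_bot, Submodule.ker_subtype]

noncomputable def kerDOneEquivCocycles : LinearMap.ker (dOne L) ≃ₗ[ℝ] cocycles L 1 :=
  (Submodule.equivMapOfInjective _ (oneForm_bijective L).1 _).trans
    (LinearEquiv.ofEq _ _ (by rw [cocycles_one, ker_dOne]))

theorem nonempty_Einf_equiv_cohomology_one (k : ℕ) (p q : ℤ) (hp : (k : ℤ) - p = 1)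
    (hq : p + q = 1) : Nonempty (Einf L k p q ≃ₗ[ℝ] cohomology L 1) := by
  unfold Einf
  rw [hp, hq, Int.toNat_one]
  have hden : (EinfDen L 1 1).comap (Zcl L 1 1).subtype = ⊥ := by
    rw [EinfDen_one, sub_self, Zcl_zero_one, Submodule.comap_bot, Submodule.ker_subtype]
  exact ⟨(Submodule.quotEquivOfEqBot _ hden).trans
    ((LinearEquiv.ofEq _ _ (Zcl_one_eq_cocycles L le_rfl)).trans
      (cohomologyOneEquivCocycles L).symm)⟩

theorem subsingleton_Einf (k : ℕ) (p q : ℤ) (hp : 2 ≤ (k : ℤ) - p) (hq : p + q = 1) :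
    Subsingleton (Einf L k p q) := by
  unfold Einf
  rw [hq, Int.toNat_one]
  refine Submodule.Quotient.subsingleton_iff.2 ?_
  rw [Submodule.comap_subtype_eq_top, EinfDen_one, Zcl_one_eq_cocycles L (by omega),
    Zcl_one_eq_cocycles L (by omega)]

end CE

theorem statement9_general (L : Type) [LieRing L] [LieAlgebra ℝ L]
    (k : ℕ) :
    Nonempty (CE.Einf L k ((k : ℤ) - 1) (2 - (k : ℤ)) ≃ₗ[ℝ] CE.cohomology L 1) ∧
      Nonempty (CE.cohomology L 1 ≃ₗ[ℝ] ↥(LinearMap.ker (CE.dOne L))) ∧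
      ∀ p : ℤ, 0 ≤ p → p ≤ (k : ℤ) - 2 → Subsingleton (CE.Einf L k p (1 - p)) :=
  ⟨CE.nonempty_Einf_equiv_cohomology_one L k _ _ (by ring) (by ring),
    ⟨(CE.cohomologyOneEquivCocycles L).trans (CE.kerDOneEquivCocycles L).symm⟩,
    fun p _ hpk => CE.subsingleton_Einf L k p _ (by omega) (by ring)⟩

/-- `E_∞^{k-1,2-k} ≅ H¹(𝔫) = ker (d : 𝔫* → Λ²𝔫*)` and
`E_∞^{p,1-p} = 0` for `p = 0, …, k-2`. -/
theorem statement9 (L : Type) [LieRing L] [LieAlgebra ℝ L]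
    [FiniteDimensional ℝ L]
    (k : ℕ) (hk : CE.lcs L k = ⊥) (hk' : CE.lcs L (k - 1) ≠ ⊥) :
    Nonempty (CE.Einf L k ((k : ℤ) - 1) (2 - (k : ℤ)) ≃ₗ[ℝ] CE.cohomology L 1) ∧
      Nonempty (CE.cohomology L 1 ≃ₗ[ℝ] ↥(LinearMap.ker (CE.dOne L))) ∧
      ∀ p : ℤ, 0 ≤ p → p ≤ (k : ℤ) - 2 → Subsingleton (CE.Einf L k p (1 - p)) :=
  statement9_general L k
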